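/- arXiv:1504.06095 — 4 statements merged into one kernel-verified Lean document; each statement's English description precedes it below -/
import Mathlib

section
/- If p is a prime, then the strong power graph of the cyclic group Z_p is isomorphic to the line graph of the disjoint union of the star K_{1,p-1} and an edge K_2. -/
/-- The strong power graph of a finite group `G`: distinct `a`, `b` are adjacent iff
`a ^ m₁ = b ^ m₂` for some positive integers `m₁, m₂ < |G|`. -/
def strongPowerGraph (G : Type*) [Group G] [Fintype G] : SimpleGraph G where
  Adj a b := a ≠ b ∧ ∃ m₁ m₂ : ℕ, 0 < m₁ ∧ m₁ < Fintype.card G ∧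
      0 < m₂ ∧ m₂ < Fintype.card G ∧ a ^ m₁ = b ^ m₂
  symm := by
    constructor
    rintro a b ⟨hab, m₁, m₂, h₁, h₂, h₃, h₄, h₅⟩
    exact ⟨hab.symm, m₂, m₁, h₃, h₄, h₁, h₂, h₅.symm⟩
  loopless := by constructor; rintro a ⟨h, -⟩; exact h rfl

noncomputable instance strongPowerGraph.decidableRel (G : Type*) [Group G] [Fintype G] :
    DecidableRel (strongPowerGraph G).Adj := fun _ _ => Classical.dec _

/-- The star graph `K_{1,m}` on `Option (Fin m)`: the center `none` is adjacent to every leaf. -/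
def starGraph (m : ℕ) : SimpleGraph (Option (Fin m)) :=
  SimpleGraph.fromRel (fun a b => a = none ∨ b = none)

/-- The disjoint union `K_{1,m} + K₂` on `Option (Fin m) ⊕ Fin 2`. -/
def starPlusEdge (m : ℕ) : SimpleGraph (Option (Fin m) ⊕ Fin 2) where
  Adj x y := match x, y with
    | Sum.inl a, Sum.inl b => (starGraph m).Adj a b
    | Sum.inr a, Sum.inr b => a ≠ b
    | _, _ => False
  symm := by
    constructor
    rintro (a | a) (b | b) h
    · exact (starGraph m).adj_symm h
    · exact h.elim
    · exact h.elim
    · exact fun hba => h hba.symm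
  loopless := by
    constructor
    rintro (a | a) h
    · exact (starGraph m).irrefl h
    · exact h rfl

/-!
In a group of prime order `p` every element `a ≠ 1` has order `p` and generates the group. So
`a ^ m ≠ 1` for `0 < m < p`, which isolates the identity, and any `b ≠ 1` is `a ^ m` with
`0 < m < p`, which makes the non-identity elements a clique: the strong power graph is the
complete graph with the identity cut off. In the line graph of `K_{1,p-1} + K₂` the `p - 1` star
edges pairwise share the centre and the edge of `K₂` meets none of them, giving the same graph.
-/

section PrimeOrder

variable {G : Type*} [Group G] [Fintype G]

theorem pow_ne_one_of_prime_card (hG : (Fintype.card G).Prime) {a : G} (ha : a ≠ 1) {m : ℕ}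
    (hm₀ : 0 < m) (hm : m < Fintype.card G) : a ^ m ≠ 1 := by
  have := Fact.mk hG
  exact pow_ne_one_of_lt_orderOf hm₀.ne' (by rwa [orderOf_eq_prime pow_card_eq_one ha])

theorem exists_pow_eq_of_prime_card (hG : (Fintype.card G).Prime) {a b : G} (ha : a ≠ 1)
    (hb : b ≠ 1) : ∃ m, 0 < m ∧ m < Fintype.card G ∧ a = b ^ m := by
  have := Fact.mk hG
  obtain ⟨k, rfl : b ^ k = a⟩ := mem_powers_of_prime_card Nat.card_eq_fintype_card hb (g' := a)
  refine ⟨k % Fintype.card G, Nat.pos_of_ne_zero fun h => ha ?_, Nat.mod_lt _ hG.pos, ?_⟩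
  · rw [← pow_mod_card, h, pow_zero]
  · rw [pow_mod_card]

theorem strongPowerGraph_adj_of_prime_card (hG : (Fintype.card G).Prime) {a b : G} :
    (strongPowerGraph G).Adj a b ↔ a ≠ b ∧ a ≠ 1 ∧ b ≠ 1 := by
  constructor
  · rintro ⟨hab, m₁, m₂, hm₁, hm₁', hm₂, hm₂', h⟩
    refine ⟨hab, fun ha => ?_, fun hb => ?_⟩
    · subst ha
      exact pow_ne_one_of_prime_card hG (Ne.symm hab) hm₂ hm₂' (by rw [← h, one_pow])
    · subst hb
      exact pow_ne_one_of_prime_card hG hab hm₁ hm₁' (by rw [h, one_pow])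
  · rintro ⟨hab, ha, hb⟩
    obtain ⟨m, hm, hm', h⟩ := exists_pow_eq_of_prime_card hG ha hb
    exact ⟨hab, 1, m, one_pos, hG.one_lt, hm, hm', by rw [pow_one, h]⟩

theorem strongPowerGraph_eq_of_prime_card (hG : (Fintype.card G).Prime) :
    strongPowerGraph G = (⊤ : SimpleGraph G).deleteIncidenceSet 1 := by
  ext a b
  rw [strongPowerGraph_adj_of_prime_card hG, SimpleGraph.deleteIncidenceSet_adj,
    SimpleGraph.top_adj]

end PrimeOrder

def SimpleGraph.Iso.deleteIncidenceSet {V W : Type*} {G : SimpleGraph V} {H : SimpleGraph W}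
    (φ : G ≃g H) {v : V} {w : W} (h : φ v = w) :
    G.deleteIncidenceSet v ≃g H.deleteIncidenceSet w where
  toEquiv := φ.toEquiv
  map_rel_iff' := by
    subst h
    simp [SimpleGraph.deleteIncidenceSet_adj, φ.map_adj_iff, φ.injective.ne_iff]

namespace starPlusEdge

variable {m : ℕ}

@[simp]
theorem adj_inl {a b : Option (Fin m)} :
    (starPlusEdge m).Adj (.inl a) (.inl b) ↔ a ≠ b ∧ (a = none ∨ b = none) := by
  change (starGraph m).Adj a b ↔ _
  rw [starGraph, SimpleGraph.fromRel_adj, or_comm (a := b = none), or_self]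

@[simp]
theorem adj_inr {a b : Fin 2} : (starPlusEdge m).Adj (.inr a) (.inr b) ↔ a ≠ b := Iff.rfl

@[simp]
theorem not_adj_inl_inr {a : Option (Fin m)} {b : Fin 2} :
    ¬(starPlusEdge m).Adj (.inl a) (.inr b) := id

@[simp]
theorem not_adj_inr_inl {a : Fin 2} {b : Option (Fin m)} :
    ¬(starPlusEdge m).Adj (.inr a) (.inl b) := id

def edge : Option (Fin m) → (starPlusEdge m).edgeSet
  | none => ⟨s(.inr 0, .inr 1), by simp⟩
  | some i => ⟨s(.inl none, .inl (some i)), by simp⟩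

theorem edge_bijective : Function.Bijective (edge (m := m)) := by
  constructor
  · rintro (_ | i) (_ | j) h <;> simp_all [edge]
  · rintro ⟨e, he⟩
    induction e using Sym2.ind with
    | _ x y =>
      rcases x with (_ | i) | a <;> rcases y with (_ | j) | b <;>
        simp [edge, Subtype.ext_iff, Option.exists] at he ⊢
      omega

theorem lineGraph_adj_edge {x y : Option (Fin m)} :
    (starPlusEdge m).lineGraph.Adj (edge x) (edge y) ↔ x ≠ y ∧ x ≠ none ∧ y ≠ none := by
  rw [SimpleGraph.lineGraph_adj_iff_exists]
  rcases x with _ | i <;> rcases y with _ | j <;> simp [edge]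

noncomputable def lineGraphIso :
    (⊤ : SimpleGraph (Option (Fin m))).deleteIncidenceSet none ≃g
      (starPlusEdge m).lineGraph where
  toEquiv := Equiv.ofBijective edge edge_bijective
  map_rel_iff' := by simp [lineGraph_adj_edge, SimpleGraph.deleteIncidenceSet_adj]

end starPlusEdge

noncomputable def Equiv.optionFinOfCardEq {V : Type*} [Fintype V] [DecidableEq V] (v : V) {n : ℕ}
    (h : Fintype.card V = n + 1) : V ≃ Option (Fin n) :=
  (Equiv.optionSubtypeNe v).symm.trans
    (Equiv.optionCongr (Fintype.equivFinOfCardEq (by simp [Fintype.card_subtype_compl, h])))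

@[simp]
theorem Equiv.optionFinOfCardEq_self {V : Type*} [Fintype V] [DecidableEq V] (v : V) {n : ℕ}
    (h : Fintype.card V = n + 1) : Equiv.optionFinOfCardEq v h v = none := by
  simp [Equiv.optionFinOfCardEq]

/-- for a prime `p`, the strong power graph of `ZMod p` (as a multiplicative
group) is isomorphic to the line graph of `K_{1,p-1} + K₂`. -/
theorem strongPowerGraph_zmod_prime_iso (p : ℕ) (hp : p.Prime) :
    haveI : NeZero p := ⟨hp.ne_zero⟩
    Nonempty (strongPowerGraph (Multiplicative (ZMod p)) ≃g (starPlusEdge (p - 1)).lineGraph) := by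
  have : NeZero p := ⟨hp.ne_zero⟩
  have hcard : Fintype.card (Multiplicative (ZMod p)) = p := by simp
  have hcard' : Fintype.card (Multiplicative (ZMod p)) = p - 1 + 1 := by
    rw [hcard, Nat.sub_add_cancel hp.one_le]
  rw [strongPowerGraph_eq_of_prime_card (by rwa [hcard])]
  exact ⟨((SimpleGraph.Iso.completeGraph (Equiv.optionFinOfCardEq 1 hcard')).deleteIncidenceSet
    (Equiv.optionFinOfCardEq_self 1 hcard')).trans starPlusEdge.lineGraphIso⟩
end

section
/- For a cyclic group G of order n ≥ 2, the Laplacian of the strong power graph P_s(G) has eigenvalues 0 with multiplicity 1, n with multiplicity n - φ(n) - 1, n - φ(n) - 1 with multiplicity 1, and n - 1 with multiplicity φ(n) - 1. -/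
/-! For cyclic `G`, two distinct elements fail to be adjacent in `P_s(G)` exactly when one of them
is the identity and the other a generator, so `P_s(G)` is the complete graph with the star from `1`
to the `φ(n)` generators deleted. Its Laplacian is `n • 1 - Bᵀ * B`, where the rows of `B` are the
all-ones vector and `e₁ - e_g` for the generators `g` (so that `Bᵀ * B` is `J` plus the Laplacian
of the star). The characteristic polynomials of `Bᵀ * B` and of the `(1 + φ(n))`-square Gram
matrix `B * Bᵀ = diag(n, 1 + J)` differ only by a power of `X`, which gives the spectrum. -/

open Matrix Polynomial Finset

theorem Matrix.eq_of_offDiag_eq_of_mulVec_one_eq {V R : Type*} [Fintype V] [DecidableEq V]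
    [Ring R] {A B : Matrix V V R} (hoff : ∀ u v, u ≠ v → A u v = B u v)
    (hmul : A *ᵥ (fun _ => 1) = B *ᵥ (fun _ => 1)) : A = B := by
  rw [← sub_eq_zero]
  ext u v
  obtain rfl | huv := eq_or_ne u v
  · have hrow : ((A - B) *ᵥ fun _ => 1) u = (A - B) u u :=
      (Fintype.sum_eq_single u fun v hv => by simp [hoff u v hv.symm]).trans (mul_one _)
    rw [← hrow, sub_mulVec, hmul, sub_self, Pi.zero_apply, zero_apply]
  · simp [hoff u v huv]

theorem Matrix.charpoly_neg_one_add_ones {ι R : Type*} [Fintype ι] [DecidableEq ι] [Nonempty ι]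
    [CommRing R] :
    (-(1 + of fun _ _ => 1) : Matrix ι ι R).charpoly =
      (X + 1) ^ (Fintype.card ι - 1) * (X + C ((Fintype.card ι : R) + 1)) := by
  have hvec : (-(1 + of fun _ _ => 1) : Matrix ι ι R) = vecMulVec (-1) 1 - scalar ι 1 := by
    ext i j
    simp only [neg_apply, add_apply, one_apply, of_apply, vecMulVec_apply, scalar_apply,
      diagonal_one, sub_apply, Pi.neg_apply, Pi.one_apply]
    ring
  obtain ⟨k, hk⟩ : ∃ k, Fintype.card ι = k + 1 :=
    Nat.exists_eq_succ_of_ne_zero Fintype.card_ne_zero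
  rw [hvec, charpoly_sub_scalar, charpoly_vecMulVec, hk]
  simp only [dotProduct, Pi.neg_apply, Pi.one_apply, mul_one, sum_neg_distrib, sum_const,
    card_univ, hk, nsmul_eq_mul, Nat.cast_add, Nat.cast_one, add_tsub_cancel_right, smul_eq_C_mul,
    map_add, map_neg, map_one, map_natCast, sub_comp, pow_comp, X_comp, mul_comp, add_comp,
    neg_comp, one_comp, natCast_comp]
  ring

namespace SimpleGraph

variable {V R : Type*}

def completeMinusStar (o : V) (S : Finset V) : SimpleGraph V :=
  (⊤ : SimpleGraph V).deleteEdges ((fun s => s(o, s)) '' S)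

theorem completeMinusStar_adj {o : V} {S : Finset V} {u v : V} :
    (completeMinusStar o S).Adj u v ↔ u ≠ v ∧ ¬(u = o ∧ v ∈ S) ∧ ¬(v = o ∧ u ∈ S) := by
  simp only [completeMinusStar, deleteEdges_adj, top_adj, Set.mem_image, Finset.mem_coe,
    Sym2.eq_iff]
  grind

variable [DecidableEq V]

instance (o : V) (S : Finset V) : DecidableRel (completeMinusStar o S).Adj :=
  fun _ _ => decidable_of_iff' _ completeMinusStar_adj

variable [Fintype V]

theorem lapMatrix_eq_of_offDiag_of_mulVec_eq_zero [Ring R] (H : SimpleGraph V)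
    [DecidableRel H.Adj] {M : Matrix V V R} (hoff : ∀ u v, u ≠ v → M u v = -H.adjMatrix R u v)
    (hM : M *ᵥ (fun _ => 1) = 0) : H.lapMatrix R = M := by
  refine Matrix.eq_of_offDiag_eq_of_mulVec_one_eq (fun u v huv => ?_) ?_
  · rw [hoff u v huv, lapMatrix, Matrix.sub_apply, degMatrix, diagonal_apply_ne _ huv, zero_sub]
  · rw [hM, lapMatrix_mulVec_const_eq_zero]

variable [CommRing R] {o : V} {S : Finset V}

variable (R o S) in
def completeMinusStarFactor : Matrix (Unit ⊕ S) V R :=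
  of (Sum.elim (fun _ => 1) fun s => Pi.single o 1 - Pi.single (s : V) 1)

omit [Fintype V] in
@[simp]
theorem completeMinusStarFactor_inl (i : Unit) :
    completeMinusStarFactor R o S (Sum.inl i) = 1 :=
  rfl

omit [Fintype V] in
@[simp]
theorem completeMinusStarFactor_inr (s : S) :
    completeMinusStarFactor R o S (Sum.inr s) = Pi.single o 1 - Pi.single (s : V) 1 :=
  rfl

theorem completeMinusStarFactor_mul_transpose (ho : o ∉ S) :
    completeMinusStarFactor R o S * (completeMinusStarFactor R o S)ᵀ =
      fromBlocks (of fun _ _ => (Fintype.card V : R)) 0 0 (1 + of fun _ _ => 1) := by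
  have hs : ∀ s : S, (s : V) ≠ o := fun s h => ho (h ▸ s.2)
  ext (_ | s) (_ | t)
  · simp [mul_apply]
  · simp [mul_apply, sum_sub_distrib]
  · simp [mul_apply, sum_sub_distrib]
  · simp [mul_apply, mul_sub, sum_sub_distrib, Pi.single_apply, hs, (hs _).symm,
      Matrix.one_apply, eq_comm (a := t), add_comm]

theorem completeMinusStarFactor_mulVec_one :
    completeMinusStarFactor R o S *ᵥ (fun _ => 1) =
      Pi.single (Sum.inl ()) (Fintype.card V : R) := by
  ext (_ | s) <;> simp [mulVec, dotProduct, sum_sub_distrib]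

omit [Fintype V] in
theorem transpose_mul_completeMinusStarFactor_apply_of_ne (ho : o ∉ S) {u v : V} (huv : u ≠ v) :
    ((completeMinusStarFactor R o S)ᵀ * completeMinusStarFactor R o S) u v =
      (completeMinusStar o S).adjMatrix R u v := by
  simp only [mul_apply, transpose_apply, Fintype.sum_sum_type, adjMatrix_apply,
    completeMinusStar_adj, completeMinusStarFactor_inl, completeMinusStarFactor_inr,
    sum_coe_sort S fun s => (Pi.single o 1 - Pi.single s 1 : V → R) u *
      (Pi.single o 1 - Pi.single s 1 : V → R) v]
  rcases eq_or_ne u o with rfl | hu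
  · by_cases hv : v ∈ S <;> simp [huv, huv.symm, hv, Pi.single_apply]
  rcases eq_or_ne v o with rfl | hv
  · by_cases hu' : u ∈ S <;> simp [huv, huv.symm, hu', Pi.single_apply]
  · simp [huv, hu, hv, Pi.single_apply]

theorem lapMatrix_completeMinusStar (ho : o ∉ S) :
    (completeMinusStar o S).lapMatrix R = (Fintype.card V : R) • 1 -
      (completeMinusStarFactor R o S)ᵀ * completeMinusStarFactor R o S := by
  refine lapMatrix_eq_of_offDiag_of_mulVec_eq_zero _ (fun u v huv => ?_) ?_
  · simp [one_apply_ne huv, transpose_mul_completeMinusStarFactor_apply_of_ne ho huv]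
  · rw [sub_mulVec, ← mulVec_mulVec, completeMinusStarFactor_mulVec_one, mulVec_single]
    ext v
    simp [smul_mulVec]

theorem charpoly_lapMatrix_completeMinusStar (ho : o ∉ S) (hS : S.Nonempty) :
    ((completeMinusStar o S).lapMatrix R).charpoly =
      X * (X - C (Fintype.card V : R)) ^ (Fintype.card V - #S - 1) *
        (X - C ((Fintype.card V : R) - #S - 1)) * (X - C ((Fintype.card V : R) - 1)) ^ (#S - 1) := by
  set n : R := ((Fintype.card V : ℕ) : R)
  have : Nonempty S := hS.coe_sort
  have hcard : Fintype.card (Unit ⊕ S) ≤ Fintype.card V := by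
    simpa [add_comm, card_insert_of_notMem ho] using (insert o S).card_le_univ
  have hshift : ((completeMinusStar o S).lapMatrix R).charpoly.comp (X + C n) =
      X ^ (Fintype.card V - #S - 1) *
        ((X + C n) * ((X + 1) ^ (#S - 1) * (X + C ((#S : R) + 1)))) := by
    rw [← charpoly_sub_scalar, lapMatrix_completeMinusStar ho, smul_one_eq_diagonal, scalar_apply,
      sub_sub_cancel_left, ← Matrix.neg_mul, charpoly_mul_comm_of_le _ _ hcard, Matrix.mul_neg,
      completeMinusStarFactor_mul_transpose ho, fromBlocks_neg, neg_zero,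
      charpoly_fromBlocks_zero₁₂, charpoly_neg_one_add_ones, Fintype.card_sum, Fintype.card_unit,
      Fintype.card_coe, Nat.sub_add_eq, Nat.sub_right_comm]
    simp [charpoly, n]
  have hinv : (X + C n).comp (X - C n) = X := by simp
  calc _ = (((completeMinusStar o S).lapMatrix R).charpoly.comp (X + C n)).comp (X - C n) := by
        rw [comp_assoc, hinv, comp_X]
    _ = _ := by
        rw [hshift]
        simp only [map_add, map_sub, map_natCast, map_one, mul_comp, pow_comp, X_comp, add_comp,
          C_comp, sub_add_cancel, one_comp, natCast_comp]
        ring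

theorem roots_charpoly_lapMatrix_completeMinusStar [IsDomain R] (ho : o ∉ S) (hS : S.Nonempty) :
    ((completeMinusStar o S).lapMatrix R).charpoly.roots =
      {0} + Multiset.replicate (Fintype.card V - #S - 1) (Fintype.card V : R) +
        {(Fintype.card V : R) - #S - 1} + Multiset.replicate (#S - 1) ((Fintype.card V : R) - 1) := by
  rw [charpoly_lapMatrix_completeMinusStar ho hS, ← roots_multiset_prod_X_sub_C (_ + _ + _ + _)]
  congr 1
  simp only [map_natCast, map_sub, map_one, map_zero, sub_zero, Multiset.map_add,
    Multiset.map_replicate, Multiset.map_singleton, Multiset.prod_add, Multiset.prod_replicate,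
    Multiset.prod_singleton]

end SimpleGraph

section CyclicGroup

variable {G : Type*} [Group G] [Fintype G]

theorem exists_pow_eq_one_iff_orderOf_ne_card {v : G} :
    (∃ m, 0 < m ∧ m < Fintype.card G ∧ v ^ m = 1) ↔ orderOf v ≠ Fintype.card G := by
  constructor
  · rintro ⟨m, hm, hmn, hv⟩ hord
    exact absurd (Nat.le_of_dvd hm (hord ▸ orderOf_dvd_of_pow_eq_one hv)) (by omega)
  · intro hord
    exact ⟨orderOf v, orderOf_pos v, orderOf_le_card_univ.lt_of_ne hord, pow_orderOf_eq_one v⟩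

theorem IsCyclic.exists_pow_lt_card_eq (hG : IsCyclic G) :
    ∃ g : G, ∀ x : G, ∃ i < Fintype.card G, g ^ i = x := by
  classical
  obtain ⟨g, hg⟩ := hG.exists_generator
  refine ⟨g, fun x => ?_⟩
  obtain ⟨i, hi, hx⟩ := mem_image.mp ((IsCyclic.image_range_card hg).symm ▸ mem_univ x)
  exact ⟨i, Nat.card_eq_fintype_card (α := G) ▸ mem_range.mp hi, hx⟩

theorem IsCyclic.exists_pow_eq_pow (hG : IsCyclic G) {u v : G} (hu : u ≠ 1) (hv : v ≠ 1) :
    ∃ m₁ m₂, 0 < m₁ ∧ m₁ < Fintype.card G ∧ 0 < m₂ ∧ m₂ < Fintype.card G ∧ u ^ m₁ = v ^ m₂ := by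
  obtain ⟨g, hg⟩ := hG.exists_pow_lt_card_eq
  obtain ⟨i, hi, rfl⟩ := hg u
  obtain ⟨j, hj, rfl⟩ := hg v
  refine ⟨j, i, Nat.pos_of_ne_zero ?_, hj, Nat.pos_of_ne_zero ?_, hi, by
    rw [← pow_mul, ← pow_mul, mul_comm]⟩
  · rintro rfl; exact hv (pow_zero g)
  · rintro rfl; exact hu (pow_zero g)

theorem strongPowerGraph_eq_completeMinusStar [DecidableEq G] (hG : IsCyclic G) :
    strongPowerGraph G = SimpleGraph.completeMinusStar 1 {g | orderOf g = Fintype.card G} := by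
  ext u v
  rw [SimpleGraph.completeMinusStar_adj]
  simp only [mem_filter, mem_univ, true_and]
  constructor
  · rintro ⟨huv, m₁, m₂, h₁, h₂, h₃, h₄, h⟩
    refine ⟨huv, ?_, ?_⟩
    · rintro ⟨rfl, hv⟩
      exact exists_pow_eq_one_iff_orderOf_ne_card.mp ⟨m₂, h₃, h₄, h.symm.trans (one_pow m₁)⟩ hv
    · rintro ⟨rfl, hu⟩
      exact exists_pow_eq_one_iff_orderOf_ne_card.mp ⟨m₁, h₁, h₂, h.trans (one_pow m₂)⟩ hu
  · rintro ⟨huv, hu, hv⟩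
    refine ⟨huv, ?_⟩
    obtain rfl | hu1 := eq_or_ne u 1
    · obtain ⟨m, hm, hmn, hvm⟩ := exists_pow_eq_one_iff_orderOf_ne_card.mpr fun h => hu ⟨rfl, h⟩
      exact ⟨m, m, hm, hmn, hm, hmn, by rw [one_pow, hvm]⟩
    obtain rfl | hv1 := eq_or_ne v 1
    · obtain ⟨m, hm, hmn, hum⟩ := exists_pow_eq_one_iff_orderOf_ne_card.mpr fun h => hv ⟨rfl, h⟩
      exact ⟨m, m, hm, hmn, hm, hmn, by rw [one_pow, hum]⟩
    exact hG.exists_pow_eq_pow hu1 hv1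

end CyclicGroup

/-- for a cyclic group `G` of order `n ≥ 2`, the Laplacian eigenvalues of
`P_s(G)` (with algebraic multiplicity) are `0` once, `n` with multiplicity `n - φ(n) - 1`,
`n - φ(n) - 1` once, and `n - 1` with multiplicity `φ(n) - 1`. -/
theorem strongPowerGraph_lapMatrix_spectrum_cyclic (G : Type*) [Group G] [Fintype G]
    [DecidableEq G] (hG : IsCyclic G) (n : ℕ) (hcard : Fintype.card G = n) (hn : 2 ≤ n) :
    ((strongPowerGraph G).lapMatrix ℝ).charpoly.roots =
      {(0 : ℝ)} + Multiset.replicate (n - Nat.totient n - 1) (n : ℝ) +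
        {((n : ℝ) - Nat.totient n - 1)} +
        Multiset.replicate (Nat.totient n - 1) ((n : ℝ) - 1) := by
  subst hcard
  set S : Finset G := {g | orderOf g = Fintype.card G}
  have hS : #S = (Fintype.card G).totient := hG.card_orderOf_eq_totient dvd_rfl
  have hone : (1 : G) ∉ S := by simp only [S, mem_filter, mem_univ, orderOf_one, true_and]; omega
  have hne : S.Nonempty := card_pos.mp (hS ▸ Nat.totient_pos.mpr (by omega))
  have hlap : (strongPowerGraph G).lapMatrix ℝ = (SimpleGraph.completeMinusStar 1 S).lapMatrix ℝ := by
    congr!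
    exact strongPowerGraph_eq_completeMinusStar hG
  rw [hlap, SimpleGraph.roots_charpoly_lapMatrix_completeMinusStar hone hne, hS]
end

section
/- Let Γ be a graph on m + n + 1 vertices such that m + n of the vertices form a clique and the remaining vertex v is adjacent to exactly n of the clique vertices (and there are no other edges). Then the permanent of the adjacency matrix of Γ equals n · Σ_{r=1}^{m+n} (-1)^{r-1} (m+n-r)! [ C(m+n-1, r-1) + (n-1) · C(m+n-2, r-1) ]. -/
/-!
The permanent of the 0-1 matrix `A` counts the permutations `σ` with `A (σ i) i = 1` for all `i`.
Here these are the derangements of `V` whose cycle through `v` enters `v` from a neighbour `a`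
and leaves it towards a neighbour `b`. Splicing `v` out of that cycle (`σ ↦ σ * swap a v`) turns
them into permutations fixing exactly `v` (and `a`, when `a = b`) and sending `a` to `b`; with
`k = m + n` there are `d (k - 1)` of them when `a = b`, and `d (k - 1) + d (k - 2)` otherwise,
the second term counting those that also send `b` to `a`. Summing over the `n²` pairs gives
`n * (d (k - 1) + (n - 1) * (d (k - 1) + d (k - 2)))`, and inclusion–exclusion for the
derangement numbers `d` turns this into the stated alternating sum.
-/

open Finset Equiv
open scoped Nat

namespace Equiv.Perm

variable {α : Type*} [Fintype α] [DecidableEq α]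

def withFixedPoints (s : Finset α) : Finset (Perm α) := {σ | ∀ x, σ x = x ↔ x ∈ s}

@[simp]
theorem mem_withFixedPoints {s : Finset α} {σ : Perm α} :
    σ ∈ withFixedPoints s ↔ ∀ x, σ x = x ↔ x ∈ s := by
  simp [withFixedPoints]

theorem card_withFixedPoints (s : Finset α) :
    #(withFixedPoints s) = numDerangements (Fintype.card α - #s) := by
  rw [← card_compl, ← Fintype.card_coe sᶜ, ← card_derangements_eq_numDerangements,
    ← Fintype.card_coe]
  refine Fintype.card_congr ((derangements.subtypeEquiv (· ∈ sᶜ)).trans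
    (subtypeEquivRight fun σ => ?_)).symm
  simp [Function.mem_fixedPoints, Function.IsFixedPt, Iff.comm]

variable {s : Finset α} {a b : α}

theorem card_withFixedPoints_filter_swapped (hab : a ≠ b) (ha : a ∉ s) (hb : b ∉ s) :
    #{σ ∈ withFixedPoints s | σ a = b ∧ σ b = a}
      = numDerangements (Fintype.card α - #s - 2) := by
  have hcard : #(insert a (insert b s)) = #s + 2 := by
    rw [card_insert_of_notMem (by simp [hab, ha]), card_insert_of_notMem hb]
  rw [Nat.sub_sub, ← hcard, ← card_withFixedPoints]
  refine card_equiv (Equiv.mulRight (swap a b)) fun σ => ?_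
  simp only [mem_filter, mem_withFixedPoints, coe_mulRight, Perm.mul_apply, mem_insert]
  constructor
  · rintro ⟨hs, hab', hba'⟩ x
    rcases eq_or_ne x a with rfl | hxa
    · simp [hba']
    rcases eq_or_ne x b with rfl | hxb
    · simp [hab']
    simp [swap_apply_of_ne_of_ne hxa hxb, hxa, hxb, hs]
  · intro h
    have hba' : σ b = a := by simpa using h a
    have hab' : σ a = b := by simpa using h b
    refine ⟨fun x => ?_, hab', hba'⟩
    rcases eq_or_ne x a with rfl | hxa
    · simp [hab', hab.symm, ha]
    rcases eq_or_ne x b with rfl | hxb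
    · simp [hba', hab, hb]
    simpa [swap_apply_of_ne_of_ne hxa hxb, hxa, hxb] using h x

theorem card_withFixedPoints_filter_not_swapped (hab : a ≠ b) (ha : a ∉ s) (hb : b ∉ s) :
    #{σ ∈ withFixedPoints s | σ a = b ∧ σ b ≠ a}
      = numDerangements (Fintype.card α - #s - 1) := by
  rw [Nat.sub_sub, ← card_insert_of_notMem ha, ← card_withFixedPoints]
  refine card_equiv (Equiv.mulLeft (swap a b)) fun σ => ?_
  simp only [mem_filter, mem_withFixedPoints, coe_mulLeft, Perm.mul_apply, mem_insert,
    swap_apply_eq_iff]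
  constructor
  · rintro ⟨hs, hab', hba'⟩ x
    rcases eq_or_ne x a with rfl | hxa
    · simp [hab']
    rcases eq_or_ne x b with rfl | hxb
    · simp [hba', hxa, hb]
    simp [swap_apply_of_ne_of_ne hxa hxb, hxa, hs]
  · intro h
    have hab' : σ a = b := by simpa using h a
    have hba' : σ b ≠ a := by simpa [hab.symm, hb] using h b
    refine ⟨fun x => ?_, hab', hba'⟩
    rcases eq_or_ne x a with rfl | hxa
    · simp [hab', hab.symm, ha]
    rcases eq_or_ne x b with rfl | hxb
    · simp only [hb, iff_false]
      exact fun h => hab (σ.injective (hab'.trans h.symm))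
    simpa [swap_apply_of_ne_of_ne hxa hxb, hxa] using h x

theorem card_withFixedPoints_filter_apply_eq (hab : a ≠ b) (ha : a ∉ s) (hb : b ∉ s) :
    #{σ ∈ withFixedPoints s | σ a = b}
      = numDerangements (Fintype.card α - #s - 1)
        + numDerangements (Fintype.card α - #s - 2) := by
  rw [← card_withFixedPoints_filter_not_swapped hab ha hb,
    ← card_withFixedPoints_filter_swapped hab ha hb,
    ← card_filter_add_card_filter_not (· b = a), filter_filter, filter_filter, add_comm]

theorem card_withFixedPoints_filter_apply_eq_apply_eq {v : α} (hab : a ≠ b) (hbv : b ≠ v)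
    (hv : v ∉ s) :
    #{σ ∈ withFixedPoints s | σ a = v ∧ σ v = b}
      = #{τ ∈ withFixedPoints (insert v s) | τ a = b} := by
  refine card_equiv (Equiv.mulRight (swap a v)) fun σ => ?_
  simp only [mem_filter, mem_withFixedPoints, coe_mulRight, Perm.mul_apply, mem_insert,
    swap_apply_left]
  constructor
  · rintro ⟨hs, hav, hvb⟩
    refine ⟨fun x => ?_, hvb⟩
    rcases eq_or_ne x a with rfl | hxa
    · have hxv : x ≠ v := by rintro rfl; exact hbv (hvb.symm.trans hav)
      have hxs : x ∉ s := fun h => hxv (((hs x).2 h).symm.trans hav)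
      simp [hvb, hab.symm, hxv, hxs]
    rcases eq_or_ne x v with rfl | hxv
    · simp [hav]
    simp [swap_apply_of_ne_of_ne hxa hxv, hxv, hs]
  · rintro ⟨h, hvb⟩
    have hav : σ a = v := by simpa using h v
    have has : a ≠ v ∧ a ∉ s := by simpa [hvb, hab.symm] using h a
    refine ⟨fun x => ?_, hav, hvb⟩
    rcases eq_or_ne x a with rfl | hxa
    · simp [hav, has.1.symm, has.2]
    rcases eq_or_ne x v with rfl | hxv
    · simp [hvb, hbv, hv]
    simpa [swap_apply_of_ne_of_ne hxa hxv, hxv] using h x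

theorem card_withFixedPoints_empty_filter_apply_eq_apply_eq {v : α} (hav : a ≠ v)
    (hbv : b ≠ v) :
    #{σ ∈ withFixedPoints ∅ | σ a = v ∧ σ v = b}
      = if a = b then numDerangements (Fintype.card α - 2)
        else numDerangements (Fintype.card α - 2) + numDerangements (Fintype.card α - 3) := by
  split_ifs with hab
  · subst hab
    simpa using card_withFixedPoints_filter_swapped hav (notMem_empty a) (notMem_empty v)
  · rw [card_withFixedPoints_filter_apply_eq_apply_eq hab hbv (notMem_empty v),
      card_withFixedPoints_filter_apply_eq hab (by simpa using hav) (by simpa using hbv)]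
    simp [Nat.sub_sub]

end Equiv.Perm

namespace SimpleGraph

variable {V : Type*} [Fintype V] [DecidableEq V] (G : SimpleGraph V) [DecidableRel G.Adj]

theorem permanent_adjMatrix {R : Type*} [CommSemiring R] :
    (G.adjMatrix R).permanent = #{σ : Perm V | ∀ i, G.Adj (σ i) i} := by
  simp only [Matrix.permanent, adjMatrix_apply, prod_boole, mem_univ, true_imp_iff, sum_boole]

theorem card_perm_adj_eq_sum_of_isClique {v : V} (hclique : G.IsClique ({v}ᶜ : Set V)) :
    #{σ : Perm V | ∀ i, G.Adj (σ i) i}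
      = ∑ a ∈ G.neighborFinset v, ∑ b ∈ G.neighborFinset v,
          #{σ ∈ Perm.withFixedPoints ∅ | σ a = v ∧ σ v = b} := by
  rw [← sum_product', card_eq_sum_card_fiberwise (f := fun σ => (σ⁻¹ v, σ v))]
  · refine sum_congr rfl fun ⟨a, b⟩ hnbr => ?_
    simp only [mem_product, mem_neighborFinset] at hnbr
    congr 1
    ext σ
    simp only [mem_filter, mem_univ, true_and, Perm.mem_withFixedPoints, notMem_empty, iff_false,
      Prod.mk.injEq, Perm.inv_eq_iff_eq, eq_comm (a := v)]
    refine ⟨fun ⟨hadj, hva⟩ => ⟨fun i => (hadj i).ne, hva⟩,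
      fun ⟨hder, hav, hvb⟩ => ⟨fun i => ?_, hav, hvb⟩⟩
    rcases eq_or_ne i v with rfl | hiv
    · exact hvb ▸ hnbr.2.symm
    rcases eq_or_ne i a with rfl | hia
    · exact hav ▸ hnbr.1
    exact hclique (hav ▸ σ.injective.ne hia) hiv (hder i)
  · intro σ hσ
    simp only [coe_filter, mem_univ, true_and, Set.mem_ofPred_eq] at hσ
    simp only [coe_product, Set.mem_prod, mem_coe, mem_neighborFinset]
    exact ⟨by simpa using hσ (σ⁻¹ v), (hσ v).symm⟩

theorem card_perm_adj_of_isClique {v : V} (hclique : G.IsClique ({v}ᶜ : Set V)) :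
    #{σ : Perm V | ∀ i, G.Adj (σ i) i}
      = G.degree v * (numDerangements (Fintype.card V - 2)
          + (G.degree v - 1) * (numDerangements (Fintype.card V - 2)
            + numDerangements (Fintype.card V - 3))) := by
  rw [card_perm_adj_eq_sum_of_isClique G hclique, ← card_neighborFinset_eq_degree,
    ← smul_eq_mul, ← sum_const]
  refine sum_congr rfl fun a ha => ?_
  have hav : a ≠ v := (G.mem_neighborFinset v a).1 ha |>.ne'
  rw [sum_congr rfl fun b hb => Perm.card_withFixedPoints_empty_filter_apply_eq_apply_eq hav
    ((G.mem_neighborFinset v b).1 hb).ne', sum_ite, filter_eq, filter_ne, if_pos ha, sum_const,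
    sum_const, card_singleton, card_erase_of_mem ha, one_smul, smul_eq_mul]

end SimpleGraph

theorem numDerangements_eq_sum_factorial_mul_choose (j : ℕ) :
    (numDerangements j : ℤ) = ∑ s ∈ range (j + 1), (-1 : ℤ) ^ s * (j - s)! * j.choose s := by
  rw [numDerangements_sum]
  refine sum_congr rfl fun s hs => ?_
  rw [Nat.ascFactorial_eq_factorial_mul_choose, Nat.add_sub_cancel' (mem_range_succ_iff.1 hs),
    Nat.choose_symm (mem_range_succ_iff.1 hs), Nat.cast_mul, mul_assoc]

theorem numDerangements_add_eq_sum_factorial_mul_choose (j : ℕ) :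
    (numDerangements (j + 1) + numDerangements j : ℤ)
      = ∑ s ∈ range (j + 2), (-1 : ℤ) ^ s * (j + 1 - s)! * j.choose s := by
  rw [numDerangements_eq_sum_factorial_mul_choose, numDerangements_eq_sum_factorial_mul_choose,
    sum_range_succ' _ (j + 1), sum_range_succ' _ (j + 1)]
  simp only [Nat.choose_succ_succ', Nat.add_sub_add_right, Nat.choose_zero_right, Nat.cast_add,
    pow_succ, mul_neg_one, neg_mul, mul_add, sum_add_distrib, sum_neg_distrib]
  ring

theorem sum_Icc_eq_sum_range_factorial_mul_choose (K j : ℕ) :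
    ∑ r ∈ Icc 1 (K + 1), (-1 : ℤ) ^ (r - 1) * (K + 1 - r)! * j.choose (r - 1)
      = ∑ s ∈ range (K + 1), (-1 : ℤ) ^ s * (K - s)! * j.choose s := by
  rw [← Ico_add_one_right_eq_Icc, sum_Ico_eq_sum_range, Nat.add_sub_cancel]
  refine sum_congr rfl fun s _ => ?_
  rw [Nat.add_sub_cancel_left, Nat.add_comm 1 s, Nat.add_sub_add_right]

theorem sum_Icc_factorial_mul_choose_sub_one {k : ℕ} (hk : 1 ≤ k) :
    ∑ r ∈ Icc 1 k, (-1 : ℤ) ^ (r - 1) * (k - r)! * (k - 1).choose (r - 1)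
      = numDerangements (k - 1) := by
  obtain ⟨K, rfl⟩ : ∃ K, k = K + 1 := ⟨k - 1, by omega⟩
  rw [sum_Icc_eq_sum_range_factorial_mul_choose, Nat.add_sub_cancel,
    numDerangements_eq_sum_factorial_mul_choose]

theorem sum_Icc_factorial_mul_choose_sub_two {k : ℕ} (hk : 2 ≤ k) :
    ∑ r ∈ Icc 1 k, (-1 : ℤ) ^ (r - 1) * (k - r)! * (k - 2).choose (r - 1)
      = numDerangements (k - 1) + numDerangements (k - 2) := by
  obtain ⟨K, rfl⟩ : ∃ K, k = K + 2 := ⟨k - 2, by omega⟩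
  rw [sum_Icc_eq_sum_range_factorial_mul_choose, Nat.add_sub_cancel,
    show K + 2 - 1 = K + 1 from rfl, numDerangements_add_eq_sum_factorial_mul_choose]

/-- let `Γ` be a graph on `m + n + 1` vertices such that the vertices other
than a distinguished vertex `v` form a clique of size `m + n`, and `v` is adjacent to exactly
`n` of them.  Then the permanent of the adjacency matrix of `Γ` is
`n · Σ_{r=1}^{m+n} (-1)^{r-1} (m+n-r)! (C(m+n-1, r-1) + (n-1) C(m+n-2, r-1))`. -/
theorem permanent_adjMatrix_clique_plus_vertex {V : Type*} [Fintype V] [DecidableEq V]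
    (Γ : SimpleGraph V) [DecidableRel Γ.Adj] (m n : ℕ) (v : V)
    (hcard : Fintype.card V = m + n + 1)
    (hclique : ∀ a b : V, a ≠ v → b ≠ v → a ≠ b → Γ.Adj a b)
    (hdeg : Γ.degree v = n) :
    (Γ.adjMatrix ℤ).permanent =
      (n : ℤ) * ∑ r ∈ Icc 1 (m + n), (-1 : ℤ) ^ (r - 1) * (Nat.factorial (m + n - r) : ℤ) *
        ((Nat.choose (m + n - 1) (r - 1) : ℤ) +
          ((n : ℤ) - 1) * (Nat.choose (m + n - 2) (r - 1) : ℤ)) := by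
  rw [Γ.permanent_adjMatrix, Γ.card_perm_adj_of_isClique fun a ha b hb => hclique a b ha hb,
    hdeg, hcard, show m + n + 1 - 2 = m + n - 1 by omega, show m + n + 1 - 3 = m + n - 2 by omega]
  simp only [mul_add, sum_add_distrib, mul_left_comm _ ((n : ℤ) - 1), ← mul_sum]
  obtain rfl | rfl | hn : n = 0 ∨ n = 1 ∨ 2 ≤ n := by omega
  · simp
  · simpa using (sum_Icc_factorial_mul_choose_sub_one (k := m + 1) (by omega)).symm
  · rw [sum_Icc_factorial_mul_choose_sub_one (by omega),
      sum_Icc_factorial_mul_choose_sub_two (by omega)]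
    push_cast [Nat.cast_sub (by omega : 1 ≤ n)]
    ring
end

section
/- If G is a finite non-cyclic group of order n, then the permanent of the Laplacian matrix of the strong power graph P_s(G) equals (-1)^n · n! · Σ_{k=0}^{n} (-1)^k n^k / k!. -/
open Finset

/-!
A non-cyclic group has no element of order `|G|`, so any two distinct elements become adjacent
via `a ^ orderOf a = 1 = b ^ orderOf b`: the strong power graph is complete and its Laplacian is
`n • 1 - J`. Expanding `∏ i (a [σ i = i] + b)` over the subsets `t` of fixed points of `σ`, and
counting the `(n - |t|)!` permutations fixing `t` pointwise, gives
`per (a • 1 + b • J) = ∑ k, C(n, k) a ^ k b ^ (n - k) (n - k)!`.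
-/

open scoped Nat

theorem strongPowerGraph_eq_top_of_not_isCyclic {G : Type*} [Group G] [Fintype G]
    (hG : ¬ IsCyclic G) : strongPowerGraph G = ⊤ := by
  have horder : ∀ x : G, orderOf x < Fintype.card G := fun x =>
    orderOf_le_card_univ.lt_of_ne fun h =>
      hG (isCyclic_of_orderOf_eq_card x (by rwa [Nat.card_eq_fintype_card]))
  ext a b
  refine ⟨fun h => h.1, fun hab => ⟨hab, orderOf a, orderOf b, orderOf_pos a, horder a,
    orderOf_pos b, horder b, by rw [pow_orderOf_eq_one, pow_orderOf_eq_one]⟩⟩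

theorem SimpleGraph.lapMatrix_top {V : Type*} [Fintype V] [DecidableEq V] {R : Type*} [Ring R] :
    (⊤ : SimpleGraph V).lapMatrix R =
      Matrix.diagonal (fun _ => (Fintype.card V : R)) + Matrix.of fun _ _ => -1 := by
  ext i j
  by_cases h : i = j
  · subst h
    simp only [SimpleGraph.lapMatrix, SimpleGraph.degMatrix]
    simp [Nat.cast_pred (Fintype.card_pos_iff.2 ⟨i⟩), sub_eq_add_neg]
  · simp [SimpleGraph.lapMatrix, SimpleGraph.degMatrix, h]

theorem Equiv.Perm.card_fixing_pointwise {α : Type*} [Fintype α] [DecidableEq α] (s : Finset α) :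
    Fintype.card {σ : Perm α // ∀ i ∈ s, σ i = i} = (Fintype.card α - #s)! := by
  have e : {σ : Perm α // ∀ i ∈ s, σ i = i} ≃ Perm {i // i ∉ s} :=
    (Equiv.subtypeEquivRight fun σ => by simp only [not_not]).trans
      (Perm.subtypeEquivSubtypePerm _).symm
  rw [Fintype.card_congr e, Fintype.card_perm, Fintype.card_subtype_compl, Fintype.card_coe]

theorem Matrix.permanent_diagonal_add_of_const {n R : Type*} [Fintype n] [DecidableEq n]
    [CommSemiring R] (a b : R) :
    (diagonal (fun _ : n => a) + of fun _ _ => b).permanent =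
      ∑ k ∈ range (Fintype.card n + 1),
        (Fintype.card n).choose k * a ^ k * b ^ (Fintype.card n - k) * (Fintype.card n - k)! := by
  have hexpand : ∀ σ : Equiv.Perm n,
      ∏ i, (diagonal (fun _ : n => a) + of fun _ _ => b : Matrix n n R) (σ i) i =
        ∑ t ∈ univ.powerset,
          (if ∀ i ∈ t, σ i = i then a ^ #t else 0) * b ^ (Fintype.card n - #t) := by
    intro σ
    simp only [add_apply, diagonal_apply, of_apply]
    rw [prod_add]
    refine sum_congr rfl fun t ht => ?_
    rw [prod_ite_zero, prod_const, prod_const, card_sdiff_of_subset (mem_powerset.1 ht),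
      Finset.card_univ]
    congr
  have hcount : ∀ t : Finset n, ∑ σ : Equiv.Perm n,
      (if ∀ i ∈ t, σ i = i then a ^ #t else 0) * b ^ (Fintype.card n - #t) =
        a ^ #t * b ^ (Fintype.card n - #t) * (Fintype.card n - #t)! := by
    intro t
    simp_rw [ite_mul, zero_mul]
    rw [← sum_filter, sum_const, nsmul_eq_mul, ← Fintype.card_subtype,
      Equiv.Perm.card_fixing_pointwise]
    ring
  rw [permanent, sum_congr rfl fun σ _ => hexpand σ, sum_comm, sum_congr rfl fun t _ => hcount t,
    sum_powerset_apply_card (fun k => a ^ k * b ^ (Fintype.card n - k) * (Fintype.card n - k)!)]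
  simp only [nsmul_eq_mul, Finset.card_univ, mul_assoc]

/-- if `G` is non-cyclic of order `n`, the permanent of the Laplacian matrix of
`P_s(G)` equals `(-1)^n · n! · Σ_{k=0}^{n} (-1)^k n^k / k!`. -/
theorem strongPowerGraph_permanent_lapMatrix_noncyclic (G : Type*) [Group G] [Fintype G]
    [DecidableEq G] (hG : ¬ IsCyclic G) (n : ℕ) (hcard : Fintype.card G = n) :
    ((strongPowerGraph G).lapMatrix ℚ).permanent =
      (-1 : ℚ) ^ n * (Nat.factorial n : ℚ) *
        ∑ k ∈ range (n + 1), (-1 : ℚ) ^ k * (n : ℚ) ^ k / (Nat.factorial k : ℚ) := by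
  -- `congr!` rather than `rw`: the two graphs carry different `DecidableRel` instances.
  have hL : (strongPowerGraph G).lapMatrix ℚ = (⊤ : SimpleGraph G).lapMatrix ℚ := by
    congr!
    exact strongPowerGraph_eq_top_of_not_isCyclic hG
  rw [hL, SimpleGraph.lapMatrix_top, Matrix.permanent_diagonal_add_of_const, hcard, mul_sum]
  refine sum_congr rfl fun k hk => ?_
  obtain ⟨m, rfl⟩ := Nat.exists_eq_add_of_le (Nat.lt_succ_iff.1 (mem_range.1 hk))
  have hfact := Nat.choose_mul_factorial_mul_factorial (Nat.le_add_right k m)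
  have hsign : (-1 : ℚ) ^ (k + m) * (-1) ^ k = (-1) ^ m := by
    rw [pow_add, mul_right_comm, ← pow_add, ← two_mul, pow_mul, neg_one_sq, one_pow, one_mul]
  rw [Nat.add_sub_cancel_left] at hfact ⊢
  rw [← hfact, ← hsign]
  push_cast
  field_simp
end
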